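/- Let A = a₀·I + a·σ, B = b₀·I + b·σ, C = c₀·I + c·σ be qubit observables whose Bloch vectors a,b,c ∈ ℝ³ are unit vectors, and let γ, β, α ∈ (0,π) be the angles between a and b, a and c, b and c respectively (so ⟨a,b⟩ = cos γ, ⟨a,c⟩ = cos β, ⟨b,c⟩ = cos α). Assume α < β+γ, β < γ+α, γ < α+β, and α+β+γ < 2π. Define φ(t₁,t₂,t₃) = cos t₁ − cos t₂ cos t₃. Then the uncertainty region {(Δ_ρA, Δ_ρB, Δ_ρC) : ρ a qubit density matrix} equals the set of (x,y,z) ∈ [0,1]³ for which there exists ε ∈ {+1,−1} with |φ(γ,α,β)√(1−x²) + ε·φ(α,β,γ)√(1−z²)|·√(1−y²) + ε·φ(β,γ,α)·√((1−z²)(1−x²)) + (1/2)[sin²(α)·x² + sin²(β)·y² + sin²(γ)·z²] ≥ 1 − cos(α)cos(β)cos(γ). -/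

import Mathlib

open Matrix MeasureTheory Filter Set
open scoped RealInnerProductSpace Kronecker ComplexOrder

noncomputable section

/-- ℝ³ with the Euclidean norm and inner product. -/
abbrev E3 : Type := EuclideanSpace ℝ (Fin 3)

/-- The Pauli matrices. -/
def pauli1 : Matrix (Fin 2) (Fin 2) ℂ := !![0, 1; 1, 0]
def pauli2 : Matrix (Fin 2) (Fin 2) ℂ := !![0, -Complex.I; Complex.I, 0]
def pauli3 : Matrix (Fin 2) (Fin 2) ℂ := !![1, 0; 0, -1]

/-- The qubit observable `a₀·I + a·σ`. -/
def qObs (a0 : ℝ) (a : E3) : Matrix (Fin 2) (Fin 2) ℂ :=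
  (a0 : ℂ) • (1 : Matrix (Fin 2) (Fin 2) ℂ)
    + (a 0 : ℂ) • pauli1 + (a 1 : ℂ) • pauli2 + (a 2 : ℂ) • pauli3

/-- A density matrix: positive semidefinite with trace one. -/
def IsDensityMatrix {n : Type*} [Fintype n] (ρ : Matrix n n ℂ) : Prop :=
  ρ.PosSemidef ∧ ρ.trace = 1

/-- Mean value `⟨M⟩_ρ = Tr(Mρ)` of an observable `M` in the state `ρ`. -/
def mean {n : Type*} [Fintype n] (M ρ : Matrix n n ℂ) : ℝ :=
  (Matrix.trace (M * ρ)).re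

/-- Variance `(Δ_ρ M)² = Tr(M²ρ) − (Tr(Mρ))²`. -/
def variance {n : Type*} [Fintype n] (M ρ : Matrix n n ℂ) : ℝ :=
  (Matrix.trace (M * M * ρ)).re - (mean M ρ) ^ 2

/-- Uncertainty `Δ_ρ M` (standard deviation). -/
def uncertainty {n : Type*} [Fintype n] (M ρ : Matrix n n ℂ) : ℝ :=
  Real.sqrt (variance M ρ)

/-- Gram matrix of a tuple of vectors in ℝ³. -/
def gram {m : ℕ} (v : Fin m → E3) : Matrix (Fin m) (Fin m) ℝ :=
  Matrix.of fun i j => (inner ℝ (v i) (v j) : ℝ)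

lemma gram_isHermitian {m : ℕ} (v : Fin m → E3) : (gram v).IsHermitian := by
  ext i j
  simp [_root_.gram, Matrix.conjTranspose_apply, mul_comm, real_inner_comm]

/-- Smallest eigenvalue of the Gram matrix. -/
def lamMin {m : ℕ} (v : Fin m → E3) : ℝ := ⨅ i, (gram_isHermitian v).eigenvalues i

/-- Largest eigenvalue of the Gram matrix. -/
def lamMax {m : ℕ} (v : Fin m → E3) : ℝ := ⨆ i, (gram_isHermitian v).eigenvalues i

/-- φ(t₁,t₂,t₃) = cos t₁ − cos t₂ · cos t₃. -/
def phi (t1 t2 t3 : ℝ) : ℝ := Real.cos t1 - Real.cos t2 * Real.cos t3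

/-!
Every qubit state is `ρ = (I + r·σ)/2` with `‖r‖ ≤ 1`, and for a unit Bloch vector `a` the
uncertainty is `Δ_ρ A = √(1 - ⟪a, r⟫²)`. The triangle inequalities make the Gram determinant
of `a, b, c` positive, so `r ↦ (⟪a, r⟫, ⟪b, r⟫, ⟪c, r⟫)` maps the unit ball onto the
ellipsoid `qᵀ G⁻¹ q ≤ 1`, `G` the Gram matrix. Written out in the angles this is the
inequality of the theorem: the uncertainties only see the absolute values of the three inner
products, `ε` is the relative sign of `⟪a, r⟫` and `⟪c, r⟫`, and the sign of `⟪b, r⟫` is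
chosen optimally.
-/

def blochDensity (r : E3) : Matrix (Fin 2) (Fin 2) ℂ := (1 / 2 : ℂ) • qObs 1 r

lemma qObs_eq (a0 : ℝ) (a : E3) : qObs a0 a =
    !![(a0 + a 2 : ℂ), a 0 - a 1 * Complex.I; a 0 + a 1 * Complex.I, a0 - a 2] := by
  ext i j
  fin_cases i <;> fin_cases j <;> simp [qObs, pauli1, pauli2, pauli3] <;> ring

lemma inner_E3_eq_sum (a r : E3) : ⟪a, r⟫ = a 0 * r 0 + a 1 * r 1 + a 2 * r 2 := by
  simp [PiLp.inner_apply, Fin.sum_univ_three, mul_comm]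

lemma norm_sq_E3_eq_sum (a : E3) : ‖a‖ ^ 2 = a 0 ^ 2 + a 1 ^ 2 + a 2 ^ 2 := by
  rw [← real_inner_self_eq_norm_sq, inner_E3_eq_sum]; ring

lemma isHermitian_qObs (a0 : ℝ) (a : E3) : (qObs a0 a).IsHermitian := by
  ext i j
  fin_cases i <;> fin_cases j <;> simp [qObs_eq, Complex.ext_iff]

lemma trace_blochDensity (r : E3) : (blochDensity r).trace = 1 := by
  simp [blochDensity, qObs_eq, Matrix.trace_fin_two]; ring

lemma det_blochDensity (r : E3) : (blochDensity r).det = ((1 - ‖r‖ ^ 2) / 4 : ℝ) := by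
  rw [blochDensity, qObs_eq, Matrix.det_smul, Matrix.det_fin_two_of, norm_sq_E3_eq_sum,
    Fintype.card_fin]
  push_cast
  linear_combination (r 1 : ℂ) ^ 2 / 4 * Complex.I_sq

lemma mean_qObs_blochDensity (a0 : ℝ) (a r : E3) :
    mean (qObs a0 a) (blochDensity r) = a0 + ⟪a, r⟫ := by
  simp [mean, blochDensity, qObs_eq, Matrix.trace_fin_two, inner_E3_eq_sum]
  ring

lemma qObs_mul_self (a0 : ℝ) (a : E3) :
    qObs a0 a * qObs a0 a = qObs (a0 ^ 2 + ‖a‖ ^ 2) ((2 * a0) • a) := by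
  rw [qObs_eq, qObs_eq, norm_sq_E3_eq_sum]
  ext i j
  fin_cases i <;> fin_cases j <;> simp [Matrix.mul_apply, Fin.sum_univ_two] <;> ring_nf <;>
    simp [Complex.I_sq]

lemma variance_qObs_blochDensity (a0 : ℝ) (a r : E3) :
    variance (qObs a0 a) (blochDensity r) = ‖a‖ ^ 2 - ⟪a, r⟫ ^ 2 := by
  have h := mean_qObs_blochDensity (a0 ^ 2 + ‖a‖ ^ 2) ((2 * a0) • a) r
  rw [mean, ← qObs_mul_self, real_inner_smul_left] at h
  rw [variance, h, mean_qObs_blochDensity]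
  ring

lemma Matrix.IsHermitian.posSemidef_iff_fin_two {A : Matrix (Fin 2) (Fin 2) ℂ}
    (hA : A.IsHermitian) : A.PosSemidef ↔ 0 ≤ A.trace ∧ 0 ≤ A.det := by
  refine ⟨fun h => ⟨h.trace_nonneg, h.det_nonneg⟩, fun ⟨htr, hdet⟩ => ?_⟩
  rw [hA.posSemidef_iff_eigenvalues_nonneg]
  rw [hA.trace_eq_sum_eigenvalues, Fin.sum_univ_two, ← RCLike.ofReal_add,
    RCLike.ofReal_nonneg] at htr
  rw [hA.det_eq_prod_eigenvalues, Fin.prod_univ_two, ← RCLike.ofReal_mul,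
    RCLike.ofReal_nonneg] at hdet
  intro i
  fin_cases i <;> simp <;> nlinarith

lemma isDensityMatrix_blochDensity_iff (r : E3) :
    IsDensityMatrix (blochDensity r) ↔ ‖r‖ ≤ 1 := by
  have hH : (blochDensity r).IsHermitian :=
    (isHermitian_qObs 1 r).smul (by simp [IsSelfAdjoint])
  rw [IsDensityMatrix, hH.posSemidef_iff_fin_two, trace_blochDensity, det_blochDensity,
    Complex.zero_le_real]
  simp only [zero_le_one, true_and, and_true]
  constructor <;> intro h <;> nlinarith [norm_nonneg r]

lemma Matrix.IsHermitian.exists_eq_blochDensity {ρ : Matrix (Fin 2) (Fin 2) ℂ}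
    (hρ : ρ.IsHermitian) (htr : ρ.trace = 1) : ∃ r : E3, ρ = blochDensity r := by
  have h00 := hρ.apply 0 0
  have h11 := hρ.apply 1 1
  have h01 := hρ.apply 0 1
  rw [Matrix.trace_fin_two] at htr
  simp only [Complex.ext_iff, Complex.star_def, Complex.conj_re, Complex.conj_im,
    Complex.add_re, Complex.add_im, Complex.one_re, Complex.one_im] at h00 h11 h01 htr
  refine ⟨!₂[2 * (ρ 1 0).re, 2 * (ρ 1 0).im, (ρ 0 0).re - (ρ 1 1).re], ?_⟩
  ext i j
  fin_cases i <;> fin_cases j <;> simp [blochDensity, qObs_eq, Complex.ext_iff] <;>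
    constructor <;> linarith

lemma isDensityMatrix_iff_exists_blochDensity {ρ : Matrix (Fin 2) (Fin 2) ℂ} :
    IsDensityMatrix ρ ↔ ∃ r : E3, ‖r‖ ≤ 1 ∧ ρ = blochDensity r := by
  constructor
  · intro hρ
    obtain ⟨r, rfl⟩ := hρ.1.isHermitian.exists_eq_blochDensity hρ.2
    exact ⟨r, (isDensityMatrix_blochDensity_iff r).1 hρ, rfl⟩
  · rintro ⟨r, hr, rfl⟩
    exact (isDensityMatrix_blochDensity_iff r).2 hr

section EllipsoidImage

variable {n : Type*} [Fintype n] [DecidableEq n]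

lemma Matrix.transpose_mul_adjugate_mul_self_mul_transpose {R : Type*} [CommRing R]
    (S : Matrix n n R) : Sᵀ * adjugate (S * Sᵀ) * S = (S * Sᵀ).det • 1 := by
  rw [adjugate_mul_distrib, Matrix.mul_assoc, Matrix.mul_assoc, ← Matrix.mul_assoc Sᵀ,
    mul_adjugate, adjugate_mul, smul_mul_smul_comm, Matrix.one_mul, det_mul, det_transpose,
    mul_comm]

lemma Matrix.dotProduct_adjugate_mul_self_mul_transpose_mulVec {R : Type*} [CommRing R]
    (S : Matrix n n R) (r : n → R) :
    (S *ᵥ r) ⬝ᵥ (adjugate (S * Sᵀ) *ᵥ (S *ᵥ r)) = (S * Sᵀ).det * (r ⬝ᵥ r) := by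
  rw [mulVec_mulVec, dotProduct_mulVec, ← vecMul_transpose, vecMul_vecMul,
    ← dotProduct_mulVec, ← Matrix.mul_assoc,
    transpose_mul_adjugate_mul_self_mul_transpose,
    smul_mulVec, one_mulVec, dotProduct_smul, smul_eq_mul]

/-- The adjugate stands in for `det (S Sᵀ) • (S Sᵀ)⁻¹`: the right side is the ellipsoid
`qᵀ (S Sᵀ)⁻¹ q ≤ 1`. -/
lemma Matrix.exists_mulVec_eq_and_dotProduct_self_le_one_iff (S : Matrix n n ℝ)
    (hS : 0 < (S * Sᵀ).det) (q : n → ℝ) :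
    (∃ r, r ⬝ᵥ r ≤ 1 ∧ S *ᵥ r = q) ↔ q ⬝ᵥ (adjugate (S * Sᵀ) *ᵥ q) ≤ (S * Sᵀ).det := by
  constructor
  · rintro ⟨r, hr, rfl⟩
    rw [dotProduct_adjugate_mul_self_mul_transpose_mulVec]
    exact mul_le_of_le_one_right hS.le hr
  · intro hq
    have hSdet : IsUnit S.det := by
      rw [isUnit_iff_ne_zero]
      intro h
      rw [det_mul, det_transpose, h, zero_mul] at hS
      exact hS.false
    have hSr : S *ᵥ (S⁻¹ *ᵥ q) = q := by
      rw [mulVec_mulVec, mul_nonsing_inv S hSdet, one_mulVec]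
    refine ⟨S⁻¹ *ᵥ q, ?_, hSr⟩
    rw [← hSr, dotProduct_adjugate_mul_self_mul_transpose_mulVec] at hq
    exact le_of_mul_le_mul_left (by rwa [mul_one]) hS

end EllipsoidImage

lemma gram_eq_mul_transpose (v : Fin 3 → E3) :
    gram v = Matrix.of (fun i j => v i j) * (Matrix.of fun i j => v i j)ᵀ := by
  ext i j
  simp [_root_.gram, Matrix.mul_apply, PiLp.inner_apply, mul_comm]

lemma exists_norm_le_one_inner_eq_iff {v : Fin 3 → E3} (hv : 0 < (gram v).det)
    (q : Fin 3 → ℝ) :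
    (∃ r : E3, ‖r‖ ≤ 1 ∧ ∀ i, ⟪v i, r⟫ = q i) ↔
      q ⬝ᵥ (adjugate (gram v) *ᵥ q) ≤ (gram v).det := by
  rw [gram_eq_mul_transpose] at hv ⊢
  rw [← Matrix.exists_mulVec_eq_and_dotProduct_self_le_one_iff _ hv,
    (WithLp.equiv 2 (Fin 3 → ℝ)).exists_congr_left]
  refine exists_congr fun r => and_congr ?_ ?_
  · rw [← sq_le_one_iff₀ (norm_nonneg _), ← real_inner_self_eq_norm_sq]
    rw [WithLp.equiv_symm_apply, EuclideanSpace.inner_toLp_toLp, star_trivial]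
  · rw [funext_iff]
    simp [Matrix.mulVec, dotProduct, PiLp.inner_apply, mul_comm]

section Angles

open Real

def cosGram (α β γ : ℝ) : Matrix (Fin 3) (Fin 3) ℝ :=
  !![1, cos γ, cos β; cos γ, 1, cos α; cos β, cos α, 1]

lemma gram_eq_cosGram {a b c : E3} {α β γ : ℝ} (ha : ‖a‖ = 1) (hb : ‖b‖ = 1) (hc : ‖c‖ = 1)
    (hab : ⟪a, b⟫ = cos γ) (hac : ⟪a, c⟫ = cos β) (hbc : ⟪b, c⟫ = cos α) :
    gram ![a, b, c] = cosGram α β γ := by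
  ext i j
  fin_cases i <;> fin_cases j <;>
    simp [_root_.gram, cosGram, ha, hb, hc, hab, hac, hbc, real_inner_comm]

lemma det_cosGram (α β γ : ℝ) :
    (cosGram α β γ).det =
      1 - cos α ^ 2 - cos β ^ 2 - cos γ ^ 2 + 2 * cos α * cos β * cos γ := by
  simp [cosGram, Matrix.det_fin_three]
  ring

/-- The determinant factors as `(cos α - cos (β + γ)) * (cos (β - γ) - cos α)`, and the
triangle inequalities make both factors positive. -/
lemma det_cosGram_pos {α β γ : ℝ} (h1 : α < β + γ) (h2 : β < γ + α) (h3 : γ < α + β)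
    (h4 : α + β + γ < 2 * π) : 0 < (cosGram α β γ).det := by
  have hlt : cos α < cos (β - γ) := by
    rw [← cos_abs (β - γ)]
    exact cos_lt_cos_of_nonneg_of_le_pi (abs_nonneg _) (by linarith)
      (abs_lt.mpr ⟨by linarith, by linarith⟩)
  have hgt : cos (β + γ) < cos α := by
    rcases le_or_gt (β + γ) π with h | h
    · exact cos_lt_cos_of_nonneg_of_le_pi (by linarith) h h1
    · rw [← cos_two_pi_sub]
      exact cos_lt_cos_of_nonneg_of_le_pi (by linarith) (by linarith) (by linarith)
  have hfactor : (cosGram α β γ).det = (cos α - cos (β + γ)) * (cos (β - γ) - cos α) := by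
    rw [det_cosGram, cos_add, cos_sub]
    linear_combination
      (cos γ ^ 2 - 1) * sin_sq_add_cos_sq β - sin β ^ 2 * sin_sq_add_cos_sq γ
  rw [hfactor]
  exact mul_pos (sub_pos.2 hgt) (sub_pos.2 hlt)

lemma dotProduct_adjugate_cosGram_mulVec (α β γ u v w : ℝ) :
    ![u, v, w] ⬝ᵥ (adjugate (cosGram α β γ) *ᵥ ![u, v, w]) =
      sin α ^ 2 * u ^ 2 + sin β ^ 2 * v ^ 2 + sin γ ^ 2 * w ^ 2
        - 2 * (phi γ α β * u * v + phi α β γ * v * w + phi β γ α * u * w) := by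
  simp [cosGram, adjugate_fin_three, dotProduct, Matrix.mulVec, Fin.sum_univ_three, phi,
    sin_sq]
  ring

lemma exists_norm_le_one_inner_eq_iff_of_angles {a b c : E3} {α β γ u v w x y z : ℝ}
    (ha : ‖a‖ = 1) (hb : ‖b‖ = 1) (hc : ‖c‖ = 1)
    (hab : ⟪a, b⟫ = cos γ) (hac : ⟪a, c⟫ = cos β) (hbc : ⟪b, c⟫ = cos α)
    (hdet : 0 < (cosGram α β γ).det)
    (hux : u ^ 2 + x ^ 2 = 1) (hvy : v ^ 2 + y ^ 2 = 1) (hwz : w ^ 2 + z ^ 2 = 1) :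
    (∃ r : E3, ‖r‖ ≤ 1 ∧ ⟪a, r⟫ = u ∧ ⟪b, r⟫ = v ∧ ⟪c, r⟫ = w) ↔
      phi γ α β * u * v + phi α β γ * v * w + phi β γ α * u * w
          + (1 / 2) * (sin α ^ 2 * x ^ 2 + sin β ^ 2 * y ^ 2 + sin γ ^ 2 * z ^ 2)
        ≥ 1 - cos α * cos β * cos γ := by
  have hG := gram_eq_cosGram ha hb hc hab hac hbc
  have hball := exists_norm_le_one_inner_eq_iff (v := ![a, b, c]) (hG ▸ hdet) ![u, v, w]
  rw [hG, dotProduct_adjugate_cosGram_mulVec, det_cosGram] at hball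
  simp only [Fin.forall_fin_succ, cons_val_zero, cons_val_succ, cons_val_fin_one,
    forall_const] at hball
  rw [hball, show x ^ 2 = 1 - u ^ 2 by linarith, show y ^ 2 = 1 - v ^ 2 by linarith,
    show z ^ 2 = 1 - w ^ 2 by linarith, sin_sq, sin_sq, sin_sq]
  constructor <;> intro h <;> linarith

end Angles

lemma exists_eq_sign_mul_abs (x : ℝ) : ∃ s : ℝ, (s = 1 ∨ s = -1) ∧ x = s * |x| := by
  rcases abs_choice x with h | h
  exacts [⟨1, .inl rfl, by rw [h, one_mul]⟩, ⟨-1, .inr rfl, by rw [h, neg_one_mul, neg_neg]⟩]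

/-- Flipping the signs of `u` and `w` together leaves `φ₁ u v + φ₂ v w + φ₃ u w` unchanged, so
only the relative sign `ε` of `u` and `w` matters; the best sign of `v` then yields the absolute
value. -/
lemma exists_sign_iff {φ₁ φ₂ φ₃ K R U V W : ℝ} (hU : 0 ≤ U) (hV : 0 ≤ V) (hW : 0 ≤ W) :
    (∃ ε : ℝ, (ε = 1 ∨ ε = -1) ∧ |φ₁ * U + ε * φ₂ * W| * V + ε * φ₃ * (W * U) + K ≥ R) ↔
      ∃ u v w : ℝ, |u| = U ∧ |v| = V ∧ |w| = W ∧
        φ₁ * u * v + φ₂ * v * w + φ₃ * u * w + K ≥ R := by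
  constructor
  · rintro ⟨ε, hε, h⟩
    obtain ⟨s, hs, hX⟩ := exists_eq_sign_mul_abs (φ₁ * U + ε * φ₂ * W)
    refine ⟨U, s * V, ε * W, abs_of_nonneg hU, ?_, ?_, ?_⟩
    · rcases hs with rfl | rfl <;> simp [abs_of_nonneg hV]
    · rcases hε with rfl | rfl <;> simp [abs_of_nonneg hW]
    · have hs2 : s * s = 1 := by rcases hs with rfl | rfl <;> norm_num
      have hmax :
          φ₁ * U * (s * V) + φ₂ * (s * V) * (ε * W) = |φ₁ * U + ε * φ₂ * W| * V := by
        linear_combination (s * V) * hX + |φ₁ * U + ε * φ₂ * W| * V * hs2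
      linarith
  · rintro ⟨u, v, w, rfl, rfl, rfl, h⟩
    obtain ⟨s, hs, hu⟩ := exists_eq_sign_mul_abs u
    obtain ⟨t, ht, hw⟩ := exists_eq_sign_mul_abs w
    have hs2 : s * s = 1 := by rcases hs with rfl | rfl <;> norm_num
    have hs1 : |s| = 1 := by rcases hs with rfl | rfl <;> norm_num
    refine ⟨s * t, by rcases hs with rfl | rfl <;> rcases ht with rfl | rfl <;> norm_num, ?_⟩
    set Y := φ₁ * |u| + s * t * φ₂ * |w|
    have hmax : φ₁ * u * v + φ₂ * v * w ≤ |Y| * |v| :=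
      calc φ₁ * u * v + φ₂ * v * w = s * Y * v := by
            linear_combination v * φ₁ * hu + φ₂ * v * hw - t * φ₂ * |w| * v * hs2
        _ ≤ |s * Y * v| := le_abs_self _
        _ = |Y| * |v| := by rw [abs_mul, abs_mul, hs1, one_mul]
    have hcross : φ₃ * u * w = s * t * φ₃ * (|w| * |u|) := by
      linear_combination φ₃ * w * hu + φ₃ * s * |u| * hw
    linarith

lemma sq_real_inner_le_one {F : Type*} [NormedAddCommGroup F] [InnerProductSpace ℝ F]
    {x y : F} (hx : ‖x‖ ≤ 1) (hy : ‖y‖ ≤ 1) : ⟪x, y⟫ ^ 2 ≤ 1 :=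
  (sq_le_one_iff_abs_le_one _).2
    ((abs_real_inner_le_norm x y).trans (mul_le_one₀ hx (norm_nonneg y) hy))

lemma uncertainty_qObs_blochDensity_eq_iff {a0 x : ℝ} {a r : E3} (ha : ‖a‖ = 1)
    (hr : ‖r‖ ≤ 1) :
    uncertainty (qObs a0 a) (blochDensity r) = x ↔ 0 ≤ x ∧ ⟪a, r⟫ ^ 2 + x ^ 2 = 1 := by
  have hu := sq_real_inner_le_one ha.le hr
  rw [uncertainty, variance_qObs_blochDensity, ha, one_pow]
  constructor
  · rintro rfl
    exact ⟨Real.sqrt_nonneg _, by rw [Real.sq_sqrt (by linarith)]; ring⟩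
  · rintro ⟨hx, hux⟩
    rw [show 1 - ⟪a, r⟫ ^ 2 = x ^ 2 by linarith, Real.sqrt_sq hx]

lemma mem_Icc_and_abs_eq_sqrt_one_sub_sq_iff {u x : ℝ} :
    x ∈ Icc 0 1 ∧ |u| = √(1 - x ^ 2) ↔ 0 ≤ x ∧ u ^ 2 + x ^ 2 = 1 := by
  constructor
  · rintro ⟨⟨hx0, hx1⟩, hu⟩
    refine ⟨hx0, ?_⟩
    rw [← sq_abs, hu, Real.sq_sqrt (by nlinarith)]
    ring
  · rintro ⟨hx, hux⟩
    refine ⟨⟨hx, by nlinarith⟩, ?_⟩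
    rw [show 1 - x ^ 2 = u ^ 2 by linarith, Real.sqrt_sq_eq_abs]

lemma mem_Icc_and_exists_sign_iff {φ₁ φ₂ φ₃ K R x y z : ℝ} :
    (x ∈ Icc 0 1 ∧ y ∈ Icc 0 1 ∧ z ∈ Icc 0 1 ∧ ∃ ε : ℝ, (ε = 1 ∨ ε = -1) ∧
      |φ₁ * √(1 - x ^ 2) + ε * φ₂ * √(1 - z ^ 2)| * √(1 - y ^ 2)
        + ε * φ₃ * √((1 - z ^ 2) * (1 - x ^ 2)) + K ≥ R) ↔
    ∃ u v w : ℝ, (0 ≤ x ∧ u ^ 2 + x ^ 2 = 1) ∧ (0 ≤ y ∧ v ^ 2 + y ^ 2 = 1) ∧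
      (0 ≤ z ∧ w ^ 2 + z ^ 2 = 1) ∧ φ₁ * u * v + φ₂ * v * w + φ₃ * u * w + K ≥ R := by
  have hsign := exists_sign_iff (φ₁ := φ₁) (φ₂ := φ₂) (φ₃ := φ₃) (K := K) (R := R)
    (Real.sqrt_nonneg (1 - x ^ 2)) (Real.sqrt_nonneg (1 - y ^ 2))
    (Real.sqrt_nonneg (1 - z ^ 2))
  constructor
  · rintro ⟨hxI, hyI, hzI, hε⟩
    rw [Real.sqrt_mul (by nlinarith [hzI.1, hzI.2])] at hε
    obtain ⟨u, v, w, hxu, hyv, hzw, h⟩ := hsign.1 hε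
    exact ⟨u, v, w, mem_Icc_and_abs_eq_sqrt_one_sub_sq_iff.1 ⟨hxI, hxu⟩,
      mem_Icc_and_abs_eq_sqrt_one_sub_sq_iff.1 ⟨hyI, hyv⟩,
      mem_Icc_and_abs_eq_sqrt_one_sub_sq_iff.1 ⟨hzI, hzw⟩, h⟩
  · rintro ⟨u, v, w, hx, hy, hz, h⟩
    obtain ⟨hxI, hxu⟩ := mem_Icc_and_abs_eq_sqrt_one_sub_sq_iff.2 hx
    obtain ⟨hyI, hyv⟩ := mem_Icc_and_abs_eq_sqrt_one_sub_sq_iff.2 hy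
    obtain ⟨hzI, hzw⟩ := mem_Icc_and_abs_eq_sqrt_one_sub_sq_iff.2 hz
    refine ⟨hxI, hyI, hzI, ?_⟩
    rw [Real.sqrt_mul (by nlinarith [hzI.1, hzI.2])]
    exact hsign.2 ⟨u, v, w, hxu, hyv, hzw, h⟩

theorem uncertainty_region_three_unit_observables_general
    (a0 b0 c0 α β γ : ℝ) (a b c : E3)
    (ha : ‖a‖ = 1) (hb : ‖b‖ = 1) (hc : ‖c‖ = 1)
    (hab : (inner ℝ a b : ℝ) = Real.cos γ)
    (hac : (inner ℝ a c : ℝ) = Real.cos β)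
    (hbc : (inner ℝ b c : ℝ) = Real.cos α)
    (h1 : α < β + γ) (h2 : β < γ + α) (h3 : γ < α + β) (h4 : α + β + γ < 2 * Real.pi) :
    {p : ℝ × ℝ × ℝ | ∃ ρ : Matrix (Fin 2) (Fin 2) ℂ, IsDensityMatrix ρ ∧
        p = (uncertainty (qObs a0 a) ρ, uncertainty (qObs b0 b) ρ,
              uncertainty (qObs c0 c) ρ)} =
    {p : ℝ × ℝ × ℝ | p.1 ∈ Set.Icc (0 : ℝ) 1 ∧ p.2.1 ∈ Set.Icc (0 : ℝ) 1 ∧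
        p.2.2 ∈ Set.Icc (0 : ℝ) 1 ∧
        ∃ ε : ℝ, (ε = 1 ∨ ε = -1) ∧
          |phi γ α β * Real.sqrt (1 - p.1 ^ 2) + ε * phi α β γ * Real.sqrt (1 - p.2.2 ^ 2)|
                * Real.sqrt (1 - p.2.1 ^ 2)
              + ε * phi β γ α * Real.sqrt ((1 - p.2.2 ^ 2) * (1 - p.1 ^ 2))
              + (1 / 2) * (Real.sin α ^ 2 * p.1 ^ 2 + Real.sin β ^ 2 * p.2.1 ^ 2
                  + Real.sin γ ^ 2 * p.2.2 ^ 2)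
            ≥ 1 - Real.cos α * Real.cos β * Real.cos γ} := by
  have hdet := det_cosGram_pos h1 h2 h3 h4
  ext ⟨x, y, z⟩
  simp only [mem_ofPred_eq, Prod.mk.injEq]
  rw [mem_Icc_and_exists_sign_iff]
  constructor
  · rintro ⟨ρ, hρ, hx, hy, hz⟩
    obtain ⟨r, hr, rfl⟩ := isDensityMatrix_iff_exists_blochDensity.1 hρ
    rw [eq_comm, uncertainty_qObs_blochDensity_eq_iff ha hr] at hx
    rw [eq_comm, uncertainty_qObs_blochDensity_eq_iff hb hr] at hy
    rw [eq_comm, uncertainty_qObs_blochDensity_eq_iff hc hr] at hz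
    exact ⟨_, _, _, hx, hy, hz, (exists_norm_le_one_inner_eq_iff_of_angles ha hb hc hab hac hbc
      hdet hx.2 hy.2 hz.2).1 ⟨r, hr, rfl, rfl, rfl⟩⟩
  · rintro ⟨u, v, w, hx, hy, hz, hineq⟩
    obtain ⟨r, hr, rfl, rfl, rfl⟩ := (exists_norm_le_one_inner_eq_iff_of_angles ha hb hc hab hac
      hbc hdet hx.2 hy.2 hz.2).2 hineq
    exact ⟨blochDensity r, isDensityMatrix_iff_exists_blochDensity.2 ⟨r, hr, rfl⟩,
      ((uncertainty_qObs_blochDensity_eq_iff ha hr).2 hx).symm,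
      ((uncertainty_qObs_blochDensity_eq_iff hb hr).2 hy).symm,
      ((uncertainty_qObs_blochDensity_eq_iff hc hr).2 hz).symm⟩

/-- the uncertainty region of three qubit observables with unit Bloch vectors,
in terms of the pairwise angles α, β, γ. -/
theorem uncertainty_region_three_unit_observables
    (a0 b0 c0 α β γ : ℝ) (a b c : E3)
    (ha : ‖a‖ = 1) (hb : ‖b‖ = 1) (hc : ‖c‖ = 1)
    (hγ : γ ∈ Set.Ioo 0 Real.pi) (hβ : β ∈ Set.Ioo 0 Real.pi) (hα : α ∈ Set.Ioo 0 Real.pi)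
    (hab : (inner ℝ a b : ℝ) = Real.cos γ)
    (hac : (inner ℝ a c : ℝ) = Real.cos β)
    (hbc : (inner ℝ b c : ℝ) = Real.cos α)
    (h1 : α < β + γ) (h2 : β < γ + α) (h3 : γ < α + β) (h4 : α + β + γ < 2 * Real.pi) :
    {p : ℝ × ℝ × ℝ | ∃ ρ : Matrix (Fin 2) (Fin 2) ℂ, IsDensityMatrix ρ ∧
        p = (uncertainty (qObs a0 a) ρ, uncertainty (qObs b0 b) ρ,
              uncertainty (qObs c0 c) ρ)} =
    {p : ℝ × ℝ × ℝ | p.1 ∈ Set.Icc (0 : ℝ) 1 ∧ p.2.1 ∈ Set.Icc (0 : ℝ) 1 ∧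
        p.2.2 ∈ Set.Icc (0 : ℝ) 1 ∧
        ∃ ε : ℝ, (ε = 1 ∨ ε = -1) ∧
          |phi γ α β * Real.sqrt (1 - p.1 ^ 2) + ε * phi α β γ * Real.sqrt (1 - p.2.2 ^ 2)|
                * Real.sqrt (1 - p.2.1 ^ 2)
              + ε * phi β γ α * Real.sqrt ((1 - p.2.2 ^ 2) * (1 - p.1 ^ 2))
              + (1 / 2) * (Real.sin α ^ 2 * p.1 ^ 2 + Real.sin β ^ 2 * p.2.1 ^ 2
                  + Real.sin γ ^ 2 * p.2.2 ^ 2)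
            ≥ 1 - Real.cos α * Real.cos β * Real.cos γ} :=
  uncertainty_region_three_unit_observables_general a0 b0 c0 α β γ a b c ha hb hc hab hac hbc h1 h2
    h3 h4
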